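/- arXiv:2404.00771 — 5 statements merged into one kernel-verified Lean document; each statement's English description precedes it below -/
import Mathlib

section
/- Let G be a connected graph and let T be the set of all twin vertices of G. Then the fault-tolerant metric dimension of G satisfies dim'(G) ≥ |T|. -/
open SimpleGraph

variable {V : Type*}

/-- `X` is a metric generator of `G`: every pair of distinct vertices is resolved
by some vertex of `X`. -/
def isMetricGen (G : SimpleGraph V) (X : Set V) : Prop :=
  ∀ x y : V, x ≠ y → ∃ u ∈ X, G.dist x u ≠ G.dist y u

/-- `F` is a fault-tolerant metric generator: `F` is a metric generator and remains
one after removing any single vertex of `F`. -/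
def isFTMetricGen (G : SimpleGraph V) (F : Set V) : Prop :=
  isMetricGen G F ∧ ∀ u ∈ F, isMetricGen G (F \ {u})

/-- The metric dimension: minimum cardinality of a (finite) metric generator. -/
noncomputable def metricDim (G : SimpleGraph V) : ℕ :=
  sInf {n : ℕ | ∃ X : Set V, X.Finite ∧ isMetricGen G X ∧ X.ncard = n}

/-- The fault-tolerant metric dimension. -/
noncomputable def ftMetricDim (G : SimpleGraph V) : ℕ :=
  sInf {n : ℕ | ∃ F : Set V, F.Finite ∧ isFTMetricGen G F ∧ F.ncard = n}

/-- Distance from a vertex `w` to an (unordered) edge `e = xy`: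
`d(w,e) = min (d(w,x)) (d(w,y))`. -/
noncomputable def edgeDist (G : SimpleGraph V) (w : V) (e : Sym2 V) : ℕ :=
  Sym2.lift ⟨fun x y => min (G.dist w x) (G.dist w y), fun _ _ => min_comm _ _⟩ e

/-- `S` is an edge metric generator of `G`: every pair of distinct edges is
resolved by some vertex of `S`. -/
def isEdgeMetricGen (G : SimpleGraph V) (S : Set V) : Prop :=
  ∀ e ∈ G.edgeSet, ∀ f ∈ G.edgeSet, e ≠ f → ∃ w ∈ S, edgeDist G w e ≠ edgeDist G w f

/-- `F` is a fault-tolerant edge metric generator. -/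
def isFTEdgeMetricGen (G : SimpleGraph V) (F : Set V) : Prop :=
  isEdgeMetricGen G F ∧ ∀ u ∈ F, isEdgeMetricGen G (F \ {u})

/-- The edge metric dimension. -/
noncomputable def edgeMetricDim (G : SimpleGraph V) : ℕ :=
  sInf {n : ℕ | ∃ S : Set V, S.Finite ∧ isEdgeMetricGen G S ∧ S.ncard = n}

/-- The fault-tolerant edge metric dimension. -/
noncomputable def ftEdgeMetricDim (G : SimpleGraph V) : ℕ :=
  sInf {n : ℕ | ∃ F : Set V, F.Finite ∧ isFTEdgeMetricGen G F ∧ F.ncard = n}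

/-- An edge metric basis: an edge metric generator of minimum cardinality. -/
def isEdgeMetricBasis (G : SimpleGraph V) (S : Set V) : Prop :=
  isEdgeMetricGen G S ∧ ∀ S' : Set V, isEdgeMetricGen G S' → S.ncard ≤ S'.ncard

/-- `u` and `v` are (distinct) twins: `N(u) = N(v)` or `N[u] = N[v]`. -/
def isTwinPair (G : SimpleGraph V) (u v : V) : Prop :=
  u ≠ v ∧ (G.neighborSet u = G.neighborSet v ∨
    insert u (G.neighborSet u) = insert v (G.neighborSet v))

/-- `u` is a twin vertex: it has a twin distinct from itself. -/
def isTwinVertex (G : SimpleGraph V) (u : V) : Prop :=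
  ∃ v, isTwinPair G u v

/-- A twin set: a maximal set of vertices in which every two vertices are twins. -/
def isTwinSet (G : SimpleGraph V) (T : Set V) : Prop :=
  (∀ u ∈ T, ∀ v ∈ T, u ≠ v → isTwinPair G u v) ∧
  ∀ T' : Set V, T ⊆ T' → (∀ u ∈ T', ∀ v ∈ T', u ≠ v → isTwinPair G u v) → T' = T

/-- Adjacency of the generalized Sierpiński graph `S_G^r` over a base graph `G`
on `[n]`.  A vertex is a string `x = x_{r-1} … x_0` (index `r-1` is the leftmost,
most significant coordinate). -/
def sierpinskiAdj {n : ℕ} (G : SimpleGraph (Fin n)) (r : ℕ) (x y : Fin r → Fin n) : Prop :=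
  ∃ t : Fin r, (∀ i : Fin r, t < i → x i = y i) ∧
    (x t ≠ y t ∧ G.Adj (x t) (y t)) ∧
    ∀ i : Fin r, i < t → x i = y t ∧ y i = x t

/-- The generalized Sierpiński graph `S_G^r`. -/
def sierpinski {n : ℕ} (G : SimpleGraph (Fin n)) (r : ℕ) :
    SimpleGraph (Fin r → Fin n) where
  Adj := sierpinskiAdj G r
  symm := by
    constructor
    rintro x y ⟨t, h1, ⟨hne, hadj⟩, h3⟩
    exact ⟨t, fun i hi => (h1 i hi).symm, ⟨hne.symm, hadj.symm⟩,
      fun i hi => ⟨(h3 i hi).2, (h3 i hi).1⟩⟩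
  loopless := by
    constructor
    rintro x ⟨t, _, ⟨hne, _⟩, _⟩
    exact hne rfl

/-- The 4-cycle on `{0,1,2,3}` with edges `01, 12, 23, 30`. -/
def C4 : SimpleGraph (Fin 4) := SimpleGraph.fromRel (fun x y => y = x + 1)

/-- The hypercube `Q_d`: binary strings of length `d`, adjacent iff they differ
in exactly one coordinate. -/
def hypercube (d : ℕ) : SimpleGraph (Fin d → Fin 2) where
  Adj x y := ∃! i, x i ≠ y i
  symm := by
    constructor
    rintro x y ⟨i, hi, hu⟩
    exact ⟨i, hi.symm, fun j hj => hu j hj.symm⟩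
  loopless := by
    constructor
    rintro x ⟨i, hi, _⟩
    exact hi rfl

/-! Twins `u`, `v` are at equal distance from every other vertex, so only `u` or `v`
themselves resolve the pair. A metric generator therefore contains one of them, and a
fault-tolerant one, which must still resolve the pair after losing that vertex, contains
both. Hence every twin vertex lies in every fault-tolerant metric generator. -/

namespace isTwinPair

variable {G : SimpleGraph V} {u v : V}

lemma symm (h : isTwinPair G u v) : isTwinPair G v u :=
  ⟨h.1.symm, h.2.imp Eq.symm Eq.symm⟩

lemma dist_le (hconn : G.Connected) (h : isTwinPair G u v) {x : V} (hxu : x ≠ u) :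
    G.dist v x ≤ G.dist u x := by
  obtain ⟨p, hp⟩ := hconn.exists_walk_length_eq_dist u x
  rw [← hp]
  cases p with
  | nil => exact absurd rfl hxu
  | @cons _ b _ hub q =>
    rcases h.2 with hN | hN
    · have hvb : G.Adj v b := show b ∈ G.neighborSet v from hN ▸ hub
      exact SimpleGraph.dist_le (.cons hvb q)
    · have hb : b ∈ insert v (G.neighborSet v) := hN ▸ Set.mem_insert_of_mem _ hub
      rcases hb with rfl | hvb
      · exact (SimpleGraph.dist_le q).trans (Nat.le_succ _)
      · exact SimpleGraph.dist_le (.cons hvb q)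

lemma dist_eq (hconn : G.Connected) (h : isTwinPair G u v) {x : V} (hxu : x ≠ u)
    (hxv : x ≠ v) : G.dist u x = G.dist v x :=
  le_antisymm (h.symm.dist_le hconn hxv) (h.dist_le hconn hxu)

lemma mem_or_mem_of_isMetricGen (hconn : G.Connected) (h : isTwinPair G u v) {X : Set V}
    (hX : isMetricGen G X) : u ∈ X ∨ v ∈ X := by
  by_contra! hnot
  obtain ⟨w, hwX, hw⟩ := hX u v h.1
  have hwu : w ≠ u := by rintro rfl; exact hnot.1 hwX
  have hwv : w ≠ v := by rintro rfl; exact hnot.2 hwX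
  exact hw (h.dist_eq hconn hwu hwv)

lemma mem_of_isFTMetricGen (hconn : G.Connected) (h : isTwinPair G u v) {F : Set V}
    (hF : isFTMetricGen G F) : u ∈ F := by
  by_contra huF
  have hvF : v ∈ F := (h.mem_or_mem_of_isMetricGen hconn hF.1).resolve_left huF
  rcases h.mem_or_mem_of_isMetricGen hconn (hF.2 v hvF) with hu | hv
  · exact huF hu.1
  · exact hv.2 rfl

end isTwinPair

section

variable {G : SimpleGraph V}

lemma isMetricGen_of_mem_or_mem (hconn : G.Connected) {X : Set V}
    (hX : ∀ x y, x ≠ y → x ∈ X ∨ y ∈ X) : isMetricGen G X := by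
  intro x y hxy
  rcases hX x y hxy with hx | hy
  · exact ⟨x, hx, by rw [dist_self]; exact (hconn.pos_dist_of_ne hxy.symm).ne⟩
  · exact ⟨y, hy, by rw [dist_self]; exact (hconn.pos_dist_of_ne hxy).ne'⟩

lemma isFTMetricGen_univ (hconn : G.Connected) : isFTMetricGen G Set.univ := by
  refine ⟨isMetricGen_of_mem_or_mem hconn fun x _ _ ↦ .inl trivial,
    fun u _ ↦ isMetricGen_of_mem_or_mem hconn fun x y hxy ↦ ?_⟩
  by_cases hxu : x = u
  · exact .inr ⟨trivial, hxu ▸ hxy.symm⟩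
  · exact .inl ⟨trivial, hxu⟩

lemma exists_isFTMetricGen_ncard_eq_ftMetricDim [Finite V] (hconn : G.Connected) :
    ∃ F : Set V, isFTMetricGen G F ∧ F.ncard = ftMetricDim G := by
  have hne : {n | ∃ F : Set V, F.Finite ∧ isFTMetricGen G F ∧ F.ncard = n}.Nonempty :=
    ⟨_, Set.univ, Set.finite_univ, isFTMetricGen_univ hconn, rfl⟩
  obtain ⟨F, -, hF, hcard⟩ := Nat.sInf_mem hne
  exact ⟨F, hF, hcard⟩

end

/-- If `T` is the set of all twin vertices of a connected graph `G`,
then the fault-tolerant metric dimension satisfies `dim'(G) ≥ |T|`. -/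
theorem ftMetricDim_ge_twins {V : Type*} [Fintype V]
    (G : SimpleGraph V) (hconn : G.Connected)
    (T : Set V) (hT : T = {u : V | isTwinVertex G u}) :
    T.ncard ≤ ftMetricDim G := by
  obtain ⟨F, hF, hcard⟩ := exists_isFTMetricGen_ncard_eq_ftMetricDim hconn
  have hTF : T ⊆ F := by
    rintro u hu
    rw [hT] at hu
    obtain ⟨v, huv⟩ := hu
    exact huv.mem_of_isFTMetricGen hconn hF
  exact hcard ▸ Set.ncard_le_ncard hTF
end

section
/- Let G be a connected graph whose set of twin vertices partitions into twin sets all of cardinality 2. If dim(G) = k, where k is the number of twin sets, then dim'(G) = 2k. -/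
open SimpleGraph

variable {V : Type*}

/-!
Twins `u, v` are swapped by a graph automorphism, so no vertex other than `u, v` resolves them:
every metric generator contains one of them and every fault-tolerant one contains both. Hence
every fault-tolerant generator contains the `2k` vertices of the twin sets. Conversely a metric
basis, having `k` vertices and meeting each of the `k` disjoint twin sets, picks exactly one
vertex from each; removing a vertex `x` of the union leaves either the basis itself or its image
under the automorphism swapping `x` with its twin, so the union is a fault-tolerant generator.
-/

variable {G : SimpleGraph V} {u v w : V}

lemma isTwinPair.adj_iff (h : isTwinPair G u v) (hwu : w ≠ u) (hwv : w ≠ v) :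
    G.Adj u w ↔ G.Adj v w := by
  rcases h.2 with hN | hN
  · rw [← mem_neighborSet, hN, mem_neighborSet]
  · simpa [hwu, hwv] using Set.ext_iff.mp hN w

lemma isTwinPair.adj_swap_iff [DecidableEq V] (h : isTwinPair G u v) {x y : V} :
    G.Adj (Equiv.swap u v x) (Equiv.swap u v y) ↔ G.Adj x y := by
  rw [Equiv.swap_apply_def, Equiv.swap_apply_def]
  split_ifs <;> subst_vars <;> grind [G.adj_comm, SimpleGraph.irrefl, h.adj_iff]

def isTwinPair.swapIso [DecidableEq V] (h : isTwinPair G u v) : G ≃g G :=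
  { Equiv.swap u v with map_rel_iff' := h.adj_swap_iff }

@[simp]
lemma isTwinPair.swapIso_apply [DecidableEq V] (h : isTwinPair G u v) (x : V) :
    h.swapIso x = Equiv.swap u v x := rfl

namespace SimpleGraph

variable {W : Type*} {H : SimpleGraph W}

lemma Hom.edist_map_le (f : G →g H) (x y : V) : H.edist (f x) (f y) ≤ G.edist x y := by
  by_cases hr : G.Reachable x y
  · obtain ⟨p, hp⟩ := hr.exists_walk_length_eq_edist
    rw [← hp, ← Walk.length_map f]
    exact edist_le _
  · rw [edist_eq_top_of_not_reachable hr]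
    exact le_top

lemma Iso.edist_map (e : G ≃g H) (x y : V) : H.edist (e x) (e y) = G.edist x y := by
  refine le_antisymm (e.toHom.edist_map_le x y) ?_
  simpa using e.symm.toHom.edist_map_le (e x) (e y)

lemma Iso.dist_map (e : G ≃g H) (x y : V) : H.dist (e x) (e y) = G.dist x y := by
  simp only [dist, e.edist_map]

end SimpleGraph

lemma isTwinPair.dist_eq_s2 (h : isTwinPair G u v) (hwu : w ≠ u) (hwv : w ≠ v) :
    G.dist u w = G.dist v w := by
  classical
  simpa [Equiv.swap_apply_of_ne_of_ne hwu hwv] using (h.swapIso.dist_map u w).symm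

lemma isMetricGen.mono {X Y : Set V} (hX : isMetricGen G X) (hXY : X ⊆ Y) :
    isMetricGen G Y := fun x y hxy =>
  let ⟨w, hw, hd⟩ := hX x y hxy
  ⟨w, hXY hw, hd⟩

lemma isMetricGen.image_iso {X : Set V} (hX : isMetricGen G X) (e : G ≃g G) :
    isMetricGen G (e '' X) := by
  intro x y hxy
  obtain ⟨w, hw, hd⟩ := hX (e.symm x) (e.symm y) (by simpa using hxy)
  refine ⟨e w, Set.mem_image_of_mem e hw, ?_⟩
  rwa [← e.dist_map (e.symm x), ← e.dist_map (e.symm y), e.apply_symm_apply,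
    e.apply_symm_apply] at hd

lemma isMetricGen_univ (hG : G.Connected) : isMetricGen G Set.univ := fun x y hxy =>
  ⟨x, trivial, by rw [dist_self, ne_comm, Ne, hG.dist_eq_zero_iff]; exact hxy.symm⟩

lemma isMetricGen.mem_or_mem {X : Set V} (hX : isMetricGen G X) (h : isTwinPair G u v) :
    u ∈ X ∨ v ∈ X := by
  obtain ⟨w, hw, hd⟩ := hX u v h.1
  by_contra! huv
  exact hd (h.dist_eq_s2 (ne_of_mem_of_not_mem hw huv.1) (ne_of_mem_of_not_mem hw huv.2))

lemma isFTMetricGen.mem_of_isTwinPair {F : Set V} (hF : isFTMetricGen G F)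
    (h : isTwinPair G u v) : u ∈ F := by
  by_contra hu
  have hv : v ∈ F := (hF.1.mem_or_mem h).resolve_left hu
  rcases (hF.2 v hv).mem_or_mem h with hu' | hv'
  · exact hu hu'.1
  · exact hv'.2 rfl

lemma isMetricGen.diff_singleton_of_isTwinPair {X F : Set V} (hX : isMetricGen G X)
    (h : isTwinPair G u v) (hXF : X ⊆ F) (hvF : v ∈ F) (huv : ¬(u ∈ X ∧ v ∈ X)) :
    isMetricGen G (F \ {u}) := by
  classical
  by_cases hu : u ∈ X
  · refine (hX.image_iso h.swapIso).mono ?_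
    rintro _ ⟨a, ha, rfl⟩
    rcases eq_or_ne a u with rfl | hau
    · simpa using ⟨hvF, h.1.symm⟩
    · have hav : a ≠ v := by rintro rfl; exact huv ⟨hu, ha⟩
      simpa [Equiv.swap_apply_of_ne_of_ne hau hav] using ⟨hXF ha, hau⟩
  · exact hX.mono fun a ha => ⟨hXF ha, fun hau => hu (hau ▸ ha)⟩

lemma isTwinSet.exists_isTwinPair {T : Set V} (hT : isTwinSet G T) (hcard : 1 < T.ncard)
    (hu : u ∈ T) : ∃ v ∈ T, isTwinPair G u v :=
  let ⟨v, hv, hvu⟩ := Set.exists_ne_of_one_lt_ncard hcard u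
  ⟨v, hv, hT.1 u hu v hv hvu.symm⟩

section Partition

variable {α : Type*} {parts : Finset (Set α)}

lemma ncard_sUnion_of_pairwiseDisjoint (hdisj : (parts : Set (Set α)).PairwiseDisjoint id)
    (hfin : ∀ P ∈ parts, P.Finite) :
    (⋃₀ (parts : Set (Set α))).ncard = ∑ P ∈ parts, P.ncard := by
  rw [Set.sUnion_eq_biUnion, parts.finite_toSet.ncard_biUnion hfin hdisj,
    finsum_mem_coe_finset]

lemma subset_sUnion_and_subsingleton_inter_of_ncard_le
    (hdisj : (parts : Set (Set α)).PairwiseDisjoint id) {X : Set α} (hX : X.Finite)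
    (hmeet : ∀ P ∈ parts, (X ∩ P).Nonempty) (hcard : X.ncard ≤ parts.card) :
    X ⊆ ⋃₀ (parts : Set (Set α)) ∧ ∀ P ∈ parts, (X ∩ P).Subsingleton := by
  choose f hf using hmeet
  have hsurj : ∀ a ∈ X, ∃ P hP, a = f P hP := by
    refine fun a ha => Finset.surj_on_of_inj_on_of_card_le f (t := hX.toFinset)
      (fun P hP => by simpa using (hf P hP).1) ?_ ?_ a (by simpa using ha)
    · exact fun P Q hP hQ hPQ => hdisj.elim_set hP hQ _ (hf P hP).2 (hPQ ▸ (hf Q hQ).2)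
    · rwa [← Set.ncard_eq_toFinset_card X hX]
  refine ⟨fun a ha => ?_, fun P hP a ha b hb => ?_⟩
  · obtain ⟨P, hP, rfl⟩ := hsurj a ha
    exact ⟨P, hP, (hf P hP).2⟩
  · obtain ⟨Q, hQ, rfl⟩ := hsurj a ha.1
    obtain ⟨R, hR, rfl⟩ := hsurj b hb.1
    obtain rfl := hdisj.elim_set hQ hP _ (hf Q hQ).2 ha.2
    obtain rfl := hdisj.elim_set hR hQ _ (hf R hR).2 hb.2
    rfl

end Partition

lemma exists_isMetricGen_ncard_eq_metricDim [Fintype V] (hG : G.Connected) :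
    ∃ X : Set V, isMetricGen G X ∧ X.ncard = metricDim G := by
  obtain ⟨X, -, hX, hcard⟩ :=
    Nat.sInf_mem (s := {n | ∃ X : Set V, X.Finite ∧ isMetricGen G X ∧ X.ncard = n})
      ⟨_, Set.univ, Set.toFinite _, isMetricGen_univ hG, rfl⟩
  exact ⟨X, hX, hcard⟩

lemma ftMetricDim_eq_ncard_of_forall_subset {F : Set V} (hfin : F.Finite)
    (hF : isFTMetricGen G F) (hmin : ∀ F', isFTMetricGen G F' → F ⊆ F') :
    ftMetricDim G = F.ncard :=
  le_antisymm (Nat.sInf_le ⟨F, hfin, hF, rfl⟩) <|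
    le_csInf ⟨_, F, hfin, hF, rfl⟩ fun _ ⟨F', hF'fin, hF', hn⟩ =>
      hn ▸ Set.ncard_le_ncard (hmin F' hF') hF'fin

section TwinPairs

variable {parts : Finset (Set V)}

lemma isMetricGen.inter_nonempty (hpair : ∀ P ∈ parts, ∀ x ∈ P, ∃ y ∈ P, isTwinPair G x y)
    {X P : Set V} (hX : isMetricGen G X) (hP : P ∈ parts) (hne : P.Nonempty) :
    (X ∩ P).Nonempty := by
  obtain ⟨x, hxP⟩ := hne
  obtain ⟨y, hyP, hxy⟩ := hpair P hP x hxP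
  rcases hX.mem_or_mem hxy with hxX | hyX
  exacts [⟨x, hxX, hxP⟩, ⟨y, hyX, hyP⟩]

lemma sUnion_subset_of_isFTMetricGen (hpair : ∀ P ∈ parts, ∀ x ∈ P, ∃ y ∈ P, isTwinPair G x y)
    {F : Set V} (hF : isFTMetricGen G F) : ⋃₀ (parts : Set (Set V)) ⊆ F := by
  rintro x ⟨P, hP, hxP⟩
  obtain ⟨_, -, hxy⟩ := hpair P hP x hxP
  exact hF.mem_of_isTwinPair hxy

lemma isFTMetricGen_sUnion (hpair : ∀ P ∈ parts, ∀ x ∈ P, ∃ y ∈ P, isTwinPair G x y)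
    {X : Set V} (hX : isMetricGen G X) (hXF : X ⊆ ⋃₀ (parts : Set (Set V)))
    (hXP : ∀ P ∈ parts, (X ∩ P).Subsingleton) :
    isFTMetricGen G (⋃₀ (parts : Set (Set V))) := by
  refine ⟨hX.mono hXF, fun x ⟨P, hP, hxP⟩ => ?_⟩
  obtain ⟨y, hyP, hxy⟩ := hpair P hP x hxP
  exact hX.diff_singleton_of_isTwinPair hxy hXF ⟨P, hP, hyP⟩
    fun ⟨hxX, hyX⟩ => hxy.1 (hXP P hP ⟨hxX, hxP⟩ ⟨hyX, hyP⟩)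

end TwinPairs

theorem ftMetricDim_eq_two_mul_of_twinSets_card_two_general {V : Type*} [Fintype V]
    (G : SimpleGraph V) (hconn : G.Connected)
    (parts : Finset (Set V)) (k : ℕ) (hk : parts.card = k)
    (hsets : ∀ P ∈ parts, isTwinSet G P)
    (hdisj : (parts : Set (Set V)).PairwiseDisjoint id)
    (hcard2 : ∀ P ∈ parts, P.ncard = 2)
    (hdim : metricDim G = k) :
    ftMetricDim G = 2 * k := by
  have hpair : ∀ P ∈ parts, ∀ x ∈ P, ∃ y ∈ P, isTwinPair G x y := fun P hP _ hx =>
    (hsets P hP).exists_isTwinPair (by rw [hcard2 P hP]; norm_num) hx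
  have hne : ∀ P ∈ parts, P.ncard ≠ 0 := fun P hP => by simp [hcard2 P hP]
  obtain ⟨X, hX, hXcard⟩ := exists_isMetricGen_ncard_eq_metricDim hconn
  obtain ⟨hXF, hXP⟩ := subset_sUnion_and_subsingleton_inter_of_ncard_le hdisj X.toFinite
    (fun P hP => hX.inter_nonempty hpair hP (Set.nonempty_of_ncard_ne_zero (hne P hP)))
    (by rw [hXcard, hdim, hk])
  rw [ftMetricDim_eq_ncard_of_forall_subset (Set.toFinite _)
      (isFTMetricGen_sUnion hpair hX hXF hXP) fun _ => sUnion_subset_of_isFTMetricGen hpair,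
    ncard_sUnion_of_pairwiseDisjoint hdisj fun P hP => Set.finite_of_ncard_ne_zero (hne P hP),
    Finset.sum_congr rfl hcard2, Finset.sum_const, hk, smul_eq_mul, mul_comm]

/-- If the set of twin vertices of a connected graph `G` partitions
into `k` twin sets, all of cardinality `2`, and `dim(G) = k`, then `dim'(G) = 2k`. -/
theorem ftMetricDim_eq_two_mul_of_twinSets_card_two {V : Type*} [Fintype V]
    (G : SimpleGraph V) (hconn : G.Connected)
    (parts : Finset (Set V)) (k : ℕ) (hk : parts.card = k)
    (hsets : ∀ P ∈ parts, isTwinSet G P)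
    (hdisj : (parts : Set (Set V)).PairwiseDisjoint id)
    (hcover : ⋃₀ (parts : Set (Set V)) = {u : V | isTwinVertex G u})
    (hcard2 : ∀ P ∈ parts, P.ncard = 2)
    (hdim : metricDim G = k) :
    ftMetricDim G = 2 * k :=
  ftMetricDim_eq_two_mul_of_twinSets_card_two_general G hconn parts k hk hsets hdisj hcard2 hdim
end

section
/- If G is a connected bipartite graph, then every metric generator of G is an edge metric generator of G. -/
open SimpleGraph

variable {V : Type*}

/-!
In a bipartite graph every closed walk has even length, so `d(u,v) + d(v,w) + d(w,u)` is
always even. Hence the endpoints of an edge lie at distances `m` and `m + 1` from any vertex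
`w`, and the edge distance `m` together with the parity of `d(w,a)` for an endpoint `a`
determines both endpoint distances. Matching the endpoints of two edges `ab`, `xy` so that
`d(a,x)` is even makes these parities agree, so a vertex resolving `a, x` (or `b, y` if
`a = x`) resolves the two edges.
-/

namespace SimpleGraph

variable {G : SimpleGraph V}

theorem edgeDist_mk (w x y : V) : edgeDist G w s(x, y) = min (G.dist w x) (G.dist w y) :=
  rfl

namespace Connected

variable (hconn : G.Connected) (hbip : G.Colorable 2)
include hconn hbip

theorem even_dist_add_dist_add_dist (u v w : V) :
    Even (G.dist u v + G.dist v w + G.dist w u) := by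
  obtain ⟨p, hp⟩ := hconn.exists_walk_length_eq_dist u v
  obtain ⟨q, hq⟩ := hconn.exists_walk_length_eq_dist v w
  obtain ⟨r, hr⟩ := hconn.exists_walk_length_eq_dist w u
  rw [← hp, ← hq, ← hr, ← Walk.length_append, ← Walk.length_append]
  exact two_colorable_iff_forall_loop_even.mp hbip u _

theorem even_dist_add_dist_iff (u v w : V) :
    Even (G.dist w u + G.dist w v) ↔ Even (G.dist u v) := by
  have h := hconn.even_dist_add_dist_add_dist hbip u v w
  rw [dist_comm (u := w) (v := v)]
  rw [Nat.even_add, Nat.even_add] at h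
  rw [Nat.even_add]
  tauto

theorem dist_eq_add_one_or_of_adj {a b : V} (hab : G.Adj a b) (w : V) :
    G.dist w b = G.dist w a + 1 ∨ G.dist w a = G.dist w b + 1 := by
  have hparity := hconn.even_dist_add_dist_iff hbip a b w
  rw [dist_eq_one_iff_adj.mpr hab, Nat.even_iff, Nat.even_iff] at hparity
  have := hab.diff_dist_adj (u := w)
  omega

theorem dist_eq_dist_of_edgeDist_eq {a b x y w : V} (hab : G.Adj a b) (hxy : G.Adj x y)
    (hax : Even (G.dist a x)) (h : edgeDist G w s(a, b) = edgeDist G w s(x, y)) :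
    G.dist w a = G.dist w x ∧ G.dist w b = G.dist w y := by
  have hstep_ab := hconn.dist_eq_add_one_or_of_adj hbip hab w
  have hstep_xy := hconn.dist_eq_add_one_or_of_adj hbip hxy w
  have hparity := (hconn.even_dist_add_dist_iff hbip a x w).mpr hax
  rw [edgeDist_mk, edgeDist_mk] at h
  rw [Nat.even_iff] at hparity
  omega

theorem exists_edgeDist_ne_of_even_dist {X : Set V} (hX : isMetricGen G X) {a b x y : V}
    (hab : G.Adj a b) (hxy : G.Adj x y) (hax : Even (G.dist a x)) (hne : s(a, b) ≠ s(x, y)) :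
    ∃ w ∈ X, edgeDist G w s(a, b) ≠ edgeDist G w s(x, y) := by
  by_contra! hsame
  have hdist (w : V) (hw : w ∈ X) :=
    hconn.dist_eq_dist_of_edgeDist_eq hbip hab hxy hax (hsame w hw)
  by_cases hax_eq : a = x
  · subst hax_eq
    obtain ⟨w, hw, hres⟩ := hX b y (by rintro rfl; exact hne rfl)
    exact hres (by rw [dist_comm, (hdist w hw).2, dist_comm])
  · obtain ⟨w, hw, hres⟩ := hX a x hax_eq
    exact hres (by rw [dist_comm, (hdist w hw).1, dist_comm])

end Connected

end SimpleGraph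

/-- In a connected bipartite graph, every metric generator is an
edge metric generator. -/
theorem isEdgeMetricGen_of_isMetricGen_of_bipartite {V : Type*}
    (G : SimpleGraph V) (hconn : G.Connected) (hbip : G.Colorable 2)
    (X : Set V) (hX : isMetricGen G X) :
    isEdgeMetricGen G X := by
  intro e he f hf hne
  induction e using Sym2.ind with | _ a b => ?_
  induction f using Sym2.ind with | _ x y => ?_
  rw [mem_edgeSet] at he hf
  rcases Nat.even_or_odd (G.dist a x) with hax | hax
  · exact hconn.exists_edgeDist_ne_of_even_dist hbip hX he hf hax hne
  · have hay : Even (G.dist a y) := by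
      have := hconn.dist_eq_add_one_or_of_adj hbip hf a
      rw [Nat.odd_iff] at hax
      rw [Nat.even_iff]
      omega
    rw [Sym2.eq_swap (a := x)] at hne ⊢
    exact hconn.exists_edgeDist_ne_of_even_dist hbip hX he hf.symm hay hne
end

section
/- If G is a connected bipartite graph, then every fault-tolerant metric generator of G is a fault-tolerant edge metric generator of G. -/
open SimpleGraph

variable {V : Type*}

/-!
In a connected bipartite graph the distances from a vertex `w` to the two ends of an edge
differ by exactly one, and the parity of `d(w, x)` is fixed by the colour class of `x`.
So if two edges `xy` and `uv`, labelled with `x` and `u` in the same colour class, are at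
the same distance from `w`, then `d(w, x) = d(w, u)` and `d(w, y) = d(w, v)`. Hence any set
resolving the vertices also resolves the edges, and fault tolerance is inherited
from the sets `F \ {u}`.
-/

theorem Nat.eq_and_eq_of_min_eq_min {a b a' b' : ℕ} (hab : b = a + 1 ∨ a = b + 1)
    (hab' : b' = a' + 1 ∨ a' = b' + 1) (hpar : a % 2 = a' % 2)
    (hmin : min a b = min a' b') : a = a' ∧ b = b' := by
  omega

variable {G : SimpleGraph V}

namespace SimpleGraph

theorem Coloring.even_dist_iff (hconn : G.Connected) (c : G.Coloring Bool) (u v : V) :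
    Even (G.dist u v) ↔ (c u ↔ c v) := by
  obtain ⟨p, hp⟩ := hconn.exists_walk_length_eq_dist u v
  rw [← hp, c.even_length_iff_congr p]

theorem Coloring.dist_eq_add_one_or_of_adj (hconn : G.Connected) (c : G.Coloring Bool)
    (w : V) {x y : V} (hxy : G.Adj x y) :
    G.dist w y = G.dist w x + 1 ∨ G.dist w x = G.dist w y + 1 := by
  have hne : G.dist w x ≠ G.dist w y := by
    intro h
    have hpar := c.even_dist_iff hconn w x
    rw [h, c.even_dist_iff hconn w y] at hpar
    apply c.valid hxy
    rw [← Bool.coe_iff_coe]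
    tauto
  grind [Adj.diff_dist_adj]

end SimpleGraph

theorem dist_eq_dist_of_edgeDist_eq (hconn : G.Connected) (c : G.Coloring Bool)
    {x y u v : V} (hxy : G.Adj x y) (huv : G.Adj u v) (hxu : c x = c u) {w : V}
    (h : edgeDist G w s(x, y) = edgeDist G w s(u, v)) :
    G.dist w x = G.dist w u ∧ G.dist w y = G.dist w v := by
  have hpar : G.dist w x % 2 = G.dist w u % 2 := by
    have heven : Even (G.dist w x) ↔ Even (G.dist w u) := by
      rw [c.even_dist_iff hconn, c.even_dist_iff hconn, hxu]
    simp only [Nat.even_iff] at heven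
    omega
  exact Nat.eq_and_eq_of_min_eq_min (c.dist_eq_add_one_or_of_adj hconn w hxy)
    (c.dist_eq_add_one_or_of_adj hconn w huv) hpar h

theorem isEdgeMetricGen_of_isMetricGen (hconn : G.Connected) (hbip : G.Colorable 2)
    {X : Set V} (hX : isMetricGen G X) : isEdgeMetricGen G X := by
  let c : G.Coloring Bool := recolorOfEquiv G finTwoEquiv hbip.some
  have resolves : ∀ {a b : V}, (∀ w ∈ X, G.dist w a = G.dist w b) → a = b := by
    intro a b hab
    by_contra hne
    obtain ⟨w, hw, hd⟩ := hX a b hne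
    exact hd (by rw [dist_comm, hab w hw, dist_comm])
  have of_same_colour : ∀ {x y u v : V}, G.Adj x y → G.Adj u v → c x = c u →
      (∀ w ∈ X, edgeDist G w s(x, y) = edgeDist G w s(u, v)) → s(x, y) = s(u, v) := by
    intro x y u v hxy huv hxu h
    have hd w hw := dist_eq_dist_of_edgeDist_eq hconn c hxy huv hxu (h w hw)
    rw [resolves fun w hw => (hd w hw).1, resolves fun w hw => (hd w hw).2]
  intro e he f hf hef
  induction e using Sym2.ind with | h x y => ?_
  induction f using Sym2.ind with | h u v => ?_
  by_contra! h
  by_cases hxu : c x = c u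
  · exact hef (of_same_colour he hf hxu h)
  · have hxv : c x = c v :=
      (Bool.eq_not_iff.mpr hxu).trans (Bool.not_eq_iff.mpr (c.valid hf))
    rw [Sym2.eq_swap (a := u)] at hef h hf
    exact hef (of_same_colour he hf hxv h)

/-- In a connected bipartite graph, every fault-tolerant metric
generator is a fault-tolerant edge metric generator. -/
theorem isFTEdgeMetricGen_of_isFTMetricGen_of_bipartite {V : Type*}
    (G : SimpleGraph V) (hconn : G.Connected) (hbip : G.Colorable 2)
    (F : Set V) (hF : isFTMetricGen G F) :
    isFTEdgeMetricGen G F :=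
  ⟨isEdgeMetricGen_of_isMetricGen hconn hbip hF.1,
    fun u hu => isEdgeMetricGen_of_isMetricGen hconn hbip (hF.2 u hu)⟩
end

section
/- For every integer r ≥ 1, the generalized Sierpiński graph S_{C_4}^r is isomorphic to a spanning subgraph of the hypercube Q_{2r} of dimension 2r; that is, there is a bijection from the vertex set of S_{C_4}^r (which has 4^r vertices) to the vertex set of Q_{2r} under which every edge of S_{C_4}^r maps to an edge of Q_{2r}. -/
open SimpleGraph

variable {V : Type*}

/-!
Encode each letter of `x ∈ [4]^r` by the Gray code of `C₄` (adjacent letters get codes in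
`𝔽₂²` differing in one bit) and take the unique `w` whose suffix sums `∑_{j ≥ k} w_j` are these
codes. Across a Sierpiński edge at position `t`, `x = u a b…b` and `y = u b a…a`, the code
strings differ by `δ = gray a - gray b` exactly at the positions `≤ t` (in characteristic two
`-δ = δ`), which is the suffix-sum string of `δ` placed at `t`. Hence the two `w`'s differ in the
single letter `t`, and by the single bit `δ` there; flattening `(𝔽₂²)^r ≅ 𝔽₂^{2r}` then gives a
hypercube edge.
-/

open Finset

section SuffixSum

variable {ι A : Type*} [LinearOrder ι] [Fintype ι] [AddCommGroup A]

variable (ι A) in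
def suffixSum : (ι → A) →+ (ι → A) where
  toFun w k := ∑ j ∈ univ.filter (k ≤ ·), w j
  map_zero' := by ext; simp
  map_add' v w := by ext; simp [sum_add_distrib]

theorem suffixSum_apply (w : ι → A) (k : ι) :
    suffixSum ι A w k = ∑ j ∈ univ.filter (k ≤ ·), w j := rfl

theorem suffixSum_single [DecidableEq ι] (t : ι) (a : A) (k : ι) :
    suffixSum ι A (Pi.single t a) k = if k ≤ t then a else 0 := by
  rw [suffixSum_apply, sum_pi_single']
  simp

theorem suffixSum_injective : Function.Injective (suffixSum ι A) := by
  classical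
  refine (injective_iff_map_eq_zero _).2 fun w hw => ?_
  by_contra hne
  have hsupp : (univ.filter (w · ≠ 0)).Nonempty := by
    simpa [Finset.Nonempty, funext_iff] using hne
  let k := (univ.filter (w · ≠ 0)).max' hsupp
  have hk : w k ≠ 0 := (mem_filter.1 (max'_mem _ hsupp)).2
  have hsum : suffixSum ι A w k = w k := by
    refine sum_eq_single k (fun j hkj hjk => ?_) (by simp)
    by_contra hj
    exact hjk (le_antisymm (le_max' _ j (by simpa using hj)) (mem_filter.1 hkj).2)
  exact hk (hsum.symm.trans (congrFun hw k))

variable (ι A) in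
noncomputable def suffixSumEquiv [Finite A] : (ι → A) ≃+ (ι → A) :=
  AddEquiv.ofBijective (suffixSum ι A) (Finite.injective_iff_bijective.1 suffixSum_injective)

end SuffixSum

theorem sierpinskiAdj.exists_comp_sub_comp_eq_suffixSum {n r : ℕ} {G : SimpleGraph (Fin n)}
    {A : Type*} [AddCommGroup A] (hA : ∀ a : A, -a = a) (c : Fin n → A)
    {x y : Fin r → Fin n} (h : sierpinskiAdj G r x y) :
    ∃ t, G.Adj (x t) (y t) ∧
      c ∘ x - c ∘ y = suffixSum (Fin r) A (Pi.single t (c (x t) - c (y t))) := by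
  obtain ⟨t, h_above, ⟨-, hadj⟩, h_below⟩ := h
  refine ⟨t, hadj, funext fun k => ?_⟩
  rw [suffixSum_single]
  rcases lt_trichotomy k t with hkt | rfl | hkt
  · rw [if_pos hkt.le, Pi.sub_apply, Function.comp_apply, Function.comp_apply,
      (h_below k hkt).1, (h_below k hkt).2, ← neg_sub, hA]
  · simp
  · simp [h_above k hkt, not_le.2 hkt]

noncomputable def grayCode : Fin 4 ≃ (Fin 2 → Fin 2) :=
  Equiv.ofBijective ![![0, 0], ![0, 1], ![1, 1], ![1, 0]] (by decide)

theorem C4_adj_grayCode_sub {a b : Fin 4} (h : C4.Adj a b) :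
    ∃ j, grayCode a - grayCode b = Pi.single j 1 := by
  simp only [C4, SimpleGraph.fromRel_adj] at h
  revert a b
  decide

theorem hypercube_adj_comp_symm_of_sub_eq_single {ι : Type*} [DecidableEq ι] {d : ℕ}
    (e : ι ≃ Fin d) {u v : ι → Fin 2} {i : ι} (h : u - v = Pi.single i 1) :
    (hypercube d).Adj (u ∘ e.symm) (v ∘ e.symm) := by
  have hne : ∀ k, u k ≠ v k ↔ k = i := fun k => by
    rw [← sub_ne_zero, ← Pi.sub_apply, h, Pi.single_apply]
    simp
  refine ⟨e i, by simp [hne], fun j hj => ?_⟩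
  rw [← e.apply_symm_apply j, (hne _).1 hj]

noncomputable def sierpinskiC4Embedding (r : ℕ) : (Fin r → Fin 4) ≃ (Fin (2 * r) → Fin 2) :=
  ((Equiv.refl _).arrowCongr grayCode)
  |>.trans (suffixSumEquiv (Fin r) (Fin 2 → Fin 2)).symm.toEquiv
  |>.trans (Equiv.curry _ _ _).symm
  |>.trans ((finProdFinEquiv.trans (finCongr (mul_comm r 2))).arrowCongr (Equiv.refl _))

theorem sierpinskiC4Embedding_apply (r : ℕ) (x : Fin r → Fin 4) :
    sierpinskiC4Embedding r x =
      Function.uncurry ((suffixSumEquiv (Fin r) (Fin 2 → Fin 2)).symm (grayCode ∘ x)) ∘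
        (finProdFinEquiv.trans (finCongr (mul_comm r 2))).symm :=
  rfl

theorem sierpinski_C4_spanning_subgraph_hypercube_general (r : ℕ) :
    Fintype.card (Fin r → Fin 4) = 4 ^ r ∧
    ∃ f : (Fin r → Fin 4) ≃ (Fin (2 * r) → Fin 2),
      ∀ x y : Fin r → Fin 4, (sierpinski C4 r).Adj x y →
        (hypercube (2 * r)).Adj (f x) (f y) := by
  refine ⟨by simp, sierpinskiC4Embedding r, fun x y hxy => ?_⟩
  obtain ⟨t, hadj, hsub⟩ :=
    sierpinskiAdj.exists_comp_sub_comp_eq_suffixSum (by decide) grayCode hxy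
  obtain ⟨j, hj⟩ := C4_adj_grayCode_sub hadj
  let S := suffixSumEquiv (Fin r) (Fin 2 → Fin 2)
  have hdiff : S.symm (grayCode ∘ x) - S.symm (grayCode ∘ y) = Pi.single t (Pi.single j 1) := by
    rw [← map_sub, hsub, ← hj]
    exact S.symm_apply_apply _
  rw [sierpinskiC4Embedding_apply, sierpinskiC4Embedding_apply]
  refine hypercube_adj_comp_symm_of_sub_eq_single _ (i := (t, j)) ?_
  rw [← Pi.uncurry_single_single, ← hdiff]
  rfl

/-- For every `r ≥ 1`, `S_{C_4}^r` (which has `4^r` vertices) is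
isomorphic to a spanning subgraph of the hypercube `Q_{2r}`: there is a bijection
of vertex sets mapping every edge of `S_{C_4}^r` to an edge of `Q_{2r}`. -/
theorem sierpinski_C4_spanning_subgraph_hypercube (r : ℕ) (hr : 1 ≤ r) :
    Fintype.card (Fin r → Fin 4) = 4 ^ r ∧
    ∃ f : (Fin r → Fin 4) ≃ (Fin (2 * r) → Fin 2),
      ∀ x y : Fin r → Fin 4, (sierpinski C4 r).Adj x y →
        (hypercube (2 * r)).Adj (f x) (f y) :=
  sierpinski_C4_spanning_subgraph_hypercube_general r
end
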